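/- Let u, v, w ∈ ℝ with u > 0, u ≥ |v| and w ≥ 0. Define g(t) = e^{2ut} + 2e^{−ut}cos(√3·v·t) − 3e^{−wt}. Then g(0) = 0, g′(0) = 3w, and g(t) > 0 for all t > 0. -/

import Mathlib

/-!
Write `x = u t`. Since `e^{-wt} ≤ 1` and `cos s ≥ 1 - s²/2`, with `(√3 v t)² ≤ 3x²`,
`e^x g(t) ≥ e^{3x} - 3e^x + 2 - 3x² = (e^x - 1)²(e^x + 2) - 3x²`, which is positive because
`e^x - 1 > x` and `e^x + 2 > 3` for `x > 0`.
-/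

noncomputable def g (u v w t : ℝ) : ℝ :=
  Real.exp (2 * u * t) + 2 * Real.exp (-(u * t)) * Real.cos (Real.sqrt 3 * v * t)
    - 3 * Real.exp (-(w * t))

open Real

lemma three_mul_sq_lt_sq_exp_sub_one_mul_exp_add_two {x : ℝ} (hx : 0 < x) :
    3 * x ^ 2 < (exp x - 1) ^ 2 * (exp x + 2) := by
  have hlin : x < exp x - 1 := by linarith [add_one_lt_exp hx.ne']
  have hsq : x ^ 2 < (exp x - 1) ^ 2 := by gcongr
  have hthree : 3 < exp x + 2 := by linarith [one_lt_exp_iff.2 hx]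
  calc 3 * x ^ 2 < 3 * (exp x - 1) ^ 2 := by linarith
    _ < (exp x - 1) ^ 2 * (exp x + 2) := by nlinarith [sq_pos_of_pos (hx.trans hlin)]

lemma exp_two_mul_add_two_mul_exp_neg_mul_cos_sub_three_pos {x s : ℝ} (hx : 0 < x)
    (hs : s ^ 2 ≤ 3 * x ^ 2) : 0 < exp (2 * x) + 2 * exp (-x) * cos s - 3 := by
  have hcos : 1 - 3 * x ^ 2 / 2 ≤ cos s := by linarith [one_sub_sq_div_two_le_cos (x := s)]
  have hexp2 : exp (2 * x) = exp x ^ 2 := by rw [← exp_nat_mul]; norm_num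
  have hinv : exp x * exp (-x) = 1 := by rw [← exp_add, add_neg_cancel, exp_zero]
  have key : 0 < exp x * (exp (2 * x) + 2 * exp (-x) * cos s - 3) := by
    calc 0 < (exp x - 1) ^ 2 * (exp x + 2) - 3 * x ^ 2 := by
          linarith [three_mul_sq_lt_sq_exp_sub_one_mul_exp_add_two hx]
      _ ≤ exp x * (exp (2 * x) + 2 * exp (-x) * cos s - 3) := by
          rw [hexp2]; linear_combination 2 * hcos - 2 * cos s * hinv
  exact pos_of_mul_pos_right key (exp_pos x).le

lemma hasDerivAt_g_zero (u v w : ℝ) : HasDerivAt (g u v w) (3 * w) 0 := by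
  have hlin (a : ℝ) : HasDerivAt (fun t : ℝ => a * t) a 0 := by
    simpa using (hasDerivAt_id (0 : ℝ)).const_mul a
  have hexp (a : ℝ) : HasDerivAt (fun t : ℝ => exp (-(a * t))) (-a) 0 := by
    simpa using (hlin a).neg.exp
  have hexp_two : HasDerivAt (fun t : ℝ => exp (2 * u * t)) (2 * u) 0 := by
    simpa using (hlin (2 * u)).exp
  have hcos : HasDerivAt (fun t : ℝ => cos (sqrt 3 * v * t)) 0 0 := by
    simpa using (hlin (sqrt 3 * v)).cos
  have h := (hexp_two.add (((hexp u).const_mul 2).mul hcos)).sub ((hexp w).const_mul 3)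
  simp only [mul_zero, neg_zero, exp_zero, cos_zero] at h
  exact h.congr_deriv (by ring)

theorem g_props (u v w : ℝ) (hu : 0 < u) (huv : |v| ≤ u) (hw : 0 ≤ w) :
    g u v w 0 = 0 ∧ HasDerivAt (g u v w) (3 * w) 0 ∧ ∀ t : ℝ, 0 < t → 0 < g u v w t := by
  refine ⟨by norm_num [g], hasDerivAt_g_zero u v w, fun t ht => ?_⟩
  have hv : v ^ 2 ≤ u ^ 2 := sq_le_sq' (abs_le.1 huv).1 (abs_le.1 huv).2
  have hs : (sqrt 3 * v * t) ^ 2 ≤ 3 * (u * t) ^ 2 := by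
    rw [mul_pow, mul_pow, sq_sqrt (by norm_num : (0 : ℝ) ≤ 3)]
    nlinarith [sq_nonneg t]
  have hpos := exp_two_mul_add_two_mul_exp_neg_mul_cos_sub_three_pos (mul_pos hu ht) hs
  have hw' : exp (-(w * t)) ≤ 1 := exp_le_one_iff.2 (neg_nonpos.2 (mul_nonneg hw ht.le))
  rw [g, mul_assoc 2 u t]
  linarith
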